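/- arXiv:2604.00060 — 3 statements merged into one kernel-verified Lean document; each statement's English description precedes it below -/
import Mathlib

section
/- Let X⋆ ∈ ℝ^{n1×n2} have rank r with compact SVD X⋆ = V⋆Σ⋆W⋆ᵀ and let X_t ∈ ℝ^{n1×n2} have rank r with compact SVD X_t = V_tΣ_tW_tᵀ. Assume max{‖V_{⋆,⊥}ᵀV_t‖, ‖W_{⋆,⊥}ᵀW_t‖} ≤ 1/√2. Then: (a) ‖V_{⋆,⊥}ᵀ X_t W_{⋆,⊥}‖ ≤ 2‖V_{⋆,⊥}ᵀV_t‖·‖V⋆ᵀ(X_t − X⋆)W_{⋆,⊥}‖; (b) ‖V_{⋆,⊥}ᵀ X_t W_{⋆,⊥}‖ ≤ 2‖W_{⋆,⊥}ᵀW_t‖·‖V_{⋆,⊥}ᵀ(X_t − X⋆)W⋆‖; and (c) ‖X_t − X⋆‖ ≤ (1 + ‖W_{⋆,⊥}ᵀW_t‖)·‖(X_t − X⋆)W⋆‖ + (1 + ‖V_{⋆,⊥}ᵀV_t‖)·‖V⋆ᵀ(X_t − X⋆)‖. -/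
/-!
Write `Δ = X_t - X⋆` and `a = ‖V_{⋆,⊥}ᵀ V_t‖`. Since `X⋆ W_{⋆,⊥} = 0`, the blocks
`V_{⋆,⊥}ᵀ X_t W_{⋆,⊥}` and `V⋆ᵀ Δ W_{⋆,⊥}` both factor through `M = Σ_t W_tᵀ W_{⋆,⊥}`, as
`V_{⋆,⊥}ᵀ V_t M` and `V⋆ᵀ V_t M`. Pythagoras for `V⋆ V⋆ᵀ + V_{⋆,⊥} V_{⋆,⊥}ᵀ = 1` gives
`‖V⋆ᵀ V_t z‖² ≥ (1 - a²) ‖z‖²`, hence `‖M‖ ≤ (1 + a) ‖V⋆ᵀ V_t M‖` once `a ≤ 1/√2`. This gives (a),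
and together with `‖Δ‖ ≤ ‖Δ W⋆‖ + ‖Δ W_{⋆,⊥}‖` also (c); (b) is (a) for the transposes.
-/

open Matrix MeasureTheory ProbabilityTheory
open scoped BigOperators

noncomputable section

/-- Frobenius inner product `⟨A, B⟩ = trace (Aᵀ * B)`. -/
def frobInner {n1 n2 : ℕ} (A B : Matrix (Fin n1) (Fin n2) ℝ) : ℝ :=
  Matrix.trace (Aᵀ * B)

/-- Frobenius norm of a matrix. -/
def frobNorm {n1 n2 : ℕ} (A : Matrix (Fin n1) (Fin n2) ℝ) : ℝ :=
  Real.sqrt (∑ i, ∑ j, A i j ^ 2)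

/-- Spectral (ℓ²-operator) norm of a matrix. -/
def specNorm {n1 n2 : ℕ} (A : Matrix (Fin n1) (Fin n2) ℝ) : ℝ :=
  ‖LinearMap.toContinuousLinearMap (Matrix.toEuclideanLin A)‖

/-- Euclidean norm of a vector in ℝ^m. -/
def vecNorm {m : ℕ} (v : Fin m → ℝ) : ℝ :=
  Real.sqrt (∑ i, v i ^ 2)

/-- Smallest nonzero singular value of a matrix: the singular values of `X` are the
square roots of the eigenvalues of `Xᴴ * X`. -/
def sigmaMin {n1 n2 : ℕ} (X : Matrix (Fin n1) (Fin n2) ℝ) : ℝ :=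
  sInf {s : ℝ | 0 < s ∧ ∃ i : Fin n2,
    s ^ 2 = (Matrix.isHermitian_conjTranspose_mul_self X).eigenvalues i}

/-- The measurement operator `𝒜(X) i = (1/√m) ⟨A i, X⟩`. -/
def measOp {n1 n2 m : ℕ} (A : Fin m → Matrix (Fin n1) (Fin n2) ℝ)
    (X : Matrix (Fin n1) (Fin n2) ℝ) : Fin m → ℝ :=
  fun i => (Real.sqrt m)⁻¹ * frobInner (A i) X

/-- The adjoint `𝒜*(u) = (1/√m) ∑ i, u i • A i`. -/
def measAdj {n1 n2 m : ℕ} (A : Fin m → Matrix (Fin n1) (Fin n2) ℝ)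
    (u : Fin m → ℝ) : Matrix (Fin n1) (Fin n2) ℝ :=
  (Real.sqrt m)⁻¹ • ∑ i, u i • A i

/-- The composite operator `𝒜*𝒜`. -/
def opAA {n1 n2 m : ℕ} (A : Fin m → Matrix (Fin n1) (Fin n2) ℝ)
    (X : Matrix (Fin n1) (Fin n2) ℝ) : Matrix (Fin n1) (Fin n2) ℝ :=
  measAdj A (measOp A X)

/-- Rank-`k` restricted isometry property with constant `δ`. -/
def HasRIP {n1 n2 m : ℕ} (A : Fin m → Matrix (Fin n1) (Fin n2) ℝ) (k : ℕ) (δ : ℝ) : Prop :=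
  ∀ Z : Matrix (Fin n1) (Fin n2) ℝ, Z.rank ≤ k →
    (1 - δ) * frobNorm Z ^ 2 ≤ vecNorm (measOp A Z) ^ 2 ∧
      vecNorm (measOp A Z) ^ 2 ≤ (1 + δ) * frobNorm Z ^ 2

/-- Compact SVD: `X = V * S * Wᵀ`, `V, W` with orthonormal columns, `S` diagonal with
positive diagonal entries. -/
def IsCompactSVD {n1 n2 r : ℕ} (X : Matrix (Fin n1) (Fin n2) ℝ)
    (V : Matrix (Fin n1) (Fin r) ℝ) (S : Matrix (Fin r) (Fin r) ℝ)
    (W : Matrix (Fin n2) (Fin r) ℝ) : Prop :=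
  X = V * S * Wᵀ ∧ Vᵀ * V = 1 ∧ Wᵀ * W = 1 ∧
    (∀ i j, i ≠ j → S i j = 0) ∧ (∀ i, 0 < S i i)

/-- `Vp` is a matrix whose columns form an orthonormal basis of the orthogonal
complement of the column space of `V` (which has orthonormal columns). -/
def IsOrthComplement {n r : ℕ} (V : Matrix (Fin n) (Fin r) ℝ)
    (Vp : Matrix (Fin n) (Fin (n - r)) ℝ) : Prop :=
  Vpᵀ * Vp = 1 ∧ Vᵀ * Vp = 0


section SpecNorm

open scoped Matrix.Norms.L2Operator

variable {m n k : ℕ}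

lemma specNorm_eq_l2_opNorm (A : Matrix (Fin m) (Fin n) ℝ) : specNorm A = ‖A‖ := rfl

lemma vecNorm_eq_norm_toLp (v : Fin n → ℝ) : vecNorm v = ‖WithLp.toLp 2 v‖ := by
  simp [vecNorm, EuclideanSpace.norm_eq]

lemma vecNorm_nonneg (v : Fin n → ℝ) : 0 ≤ vecNorm v := Real.sqrt_nonneg _

lemma vecNorm_sq (v : Fin n → ℝ) : vecNorm v ^ 2 = v ⬝ᵥ v := by
  rw [vecNorm, Real.sq_sqrt (by positivity)]
  simp [dotProduct, sq]

lemma vecNorm_mulVec_le (A : Matrix (Fin m) (Fin n) ℝ) (v : Fin n → ℝ) :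
    vecNorm (A *ᵥ v) ≤ specNorm A * vecNorm v := by
  simpa [vecNorm_eq_norm_toLp, specNorm_eq_l2_opNorm] using
    A.l2_opNorm_mulVec (WithLp.toLp 2 v)

lemma specNorm_le_of_forall_vecNorm_mulVec_le (A : Matrix (Fin m) (Fin n) ℝ) {c : ℝ}
    (hc : 0 ≤ c) (h : ∀ v, vecNorm (A *ᵥ v) ≤ c * vecNorm v) : specNorm A ≤ c :=
  ContinuousLinearMap.opNorm_le_bound _ hc fun x => by
    simpa [vecNorm_eq_norm_toLp, Matrix.toLpLin_apply] using h x.ofLp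

lemma specNorm_nonneg (A : Matrix (Fin m) (Fin n) ℝ) : 0 ≤ specNorm A := norm_nonneg _

lemma specNorm_add_le (A B : Matrix (Fin m) (Fin n) ℝ) :
    specNorm (A + B) ≤ specNorm A + specNorm B := norm_add_le A B

lemma specNorm_mul_le (A : Matrix (Fin m) (Fin n) ℝ) (B : Matrix (Fin n) (Fin k) ℝ) :
    specNorm (A * B) ≤ specNorm A * specNorm B := A.l2_opNorm_mul B

lemma specNorm_mul_le_of_specNorm_right_le_one (A : Matrix (Fin m) (Fin n) ℝ)
    {B : Matrix (Fin n) (Fin k) ℝ} (hB : specNorm B ≤ 1) : specNorm (A * B) ≤ specNorm A :=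
  (specNorm_mul_le A B).trans (mul_le_of_le_one_right (specNorm_nonneg A) hB)

lemma specNorm_mul_le_of_specNorm_left_le_one {A : Matrix (Fin m) (Fin n) ℝ}
    (hA : specNorm A ≤ 1) (B : Matrix (Fin n) (Fin k) ℝ) : specNorm (A * B) ≤ specNorm B :=
  (specNorm_mul_le A B).trans (mul_le_of_le_one_left (specNorm_nonneg B) hA)

lemma specNorm_transpose (A : Matrix (Fin m) (Fin n) ℝ) : specNorm Aᵀ = specNorm A := by
  simpa [specNorm_eq_l2_opNorm] using A.l2_opNorm_conjTranspose

end SpecNorm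

section OrthonormalFrames

variable {n r k : ℕ}

lemma mulVec_dotProduct_mulVec_self {m : ℕ} (A : Matrix (Fin m) (Fin n) ℝ) (w : Fin n → ℝ) :
    (A *ᵥ w) ⬝ᵥ (A *ᵥ w) = w ⬝ᵥ ((Aᵀ * A) *ᵥ w) := by
  rw [← Matrix.mulVec_mulVec, Matrix.dotProduct_mulVec w, Matrix.vecMul_transpose]

lemma vecNorm_mulVec_of_transpose_mul_self {V : Matrix (Fin n) (Fin r) ℝ} (hV : Vᵀ * V = 1)
    (z : Fin r → ℝ) : vecNorm (V *ᵥ z) = vecNorm z := by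
  refine (sq_eq_sq₀ (vecNorm_nonneg _) (vecNorm_nonneg _)).1 ?_
  rw [vecNorm_sq, vecNorm_sq, mulVec_dotProduct_mulVec_self, hV, Matrix.one_mulVec]

lemma specNorm_le_one_of_transpose_mul_self {V : Matrix (Fin n) (Fin r) ℝ} (hV : Vᵀ * V = 1) :
    specNorm V ≤ 1 :=
  specNorm_le_of_forall_vecNorm_mulVec_le V zero_le_one fun z => by
    rw [vecNorm_mulVec_of_transpose_mul_self hV, one_mul]

lemma vecNorm_sq_add_vecNorm_sq {P : Matrix (Fin n) (Fin r) ℝ} {Pp : Matrix (Fin n) (Fin k) ℝ}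
    (hcomp : P * Pᵀ + Pp * Ppᵀ = 1) (w : Fin n → ℝ) :
    vecNorm (Pᵀ *ᵥ w) ^ 2 + vecNorm (Ppᵀ *ᵥ w) ^ 2 = vecNorm w ^ 2 := by
  simp only [vecNorm_sq, mulVec_dotProduct_mulVec_self, Matrix.transpose_transpose]
  rw [← dotProduct_add, ← Matrix.add_mulVec, hcomp, Matrix.one_mulVec]

lemma le_of_transpose_mul_self_eq_one {V : Matrix (Fin n) (Fin r) ℝ} (hV : Vᵀ * V = 1) :
    r ≤ n := by
  have h := (Matrix.rank_mul_le_right Vᵀ V).trans V.rank_le_card_height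
  simpa [hV] using h

lemma IsOrthComplement.mul_transpose_add_mul_transpose {V : Matrix (Fin n) (Fin r) ℝ}
    {Vp : Matrix (Fin n) (Fin (n - r)) ℝ} (hVp : IsOrthComplement V Vp) (hV : Vᵀ * V = 1) :
    V * Vᵀ + Vp * Vpᵀ = 1 := by
  obtain ⟨hVp1, hVVp⟩ := hVp
  have e : Fin n ≃ Fin r ⊕ Fin (n - r) :=
    (finCongr (Nat.add_sub_cancel' (le_of_transpose_mul_self_eq_one hV))).symm.trans
      finSumFinEquiv.symm
  have hVpV : Vpᵀ * V = 0 := by simpa using congrArg Matrix.transpose hVVp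
  have hrows : Matrix.fromRows Vᵀ Vpᵀ * Matrix.fromCols V Vp = 1 := by
    rw [Matrix.fromRows_mul_fromCols, hV, hVp1, hVVp, hVpV, Matrix.fromBlocks_one]
  simpa [Matrix.fromCols_mul_fromRows] using
    (Matrix.fromCols_mul_fromRows_eq_one_comm e V Vp Vᵀ Vpᵀ).mpr hrows

end OrthonormalFrames

lemma one_le_sq_one_add_mul_one_sub_sq {a : ℝ} (ha0 : 0 ≤ a) (ha : a ≤ 1 / Real.sqrt 2) :
    1 ≤ (1 + a) ^ 2 * (1 - a ^ 2) := by
  have ha2 : a ^ 2 ≤ 1 / 2 := by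
    simpa [div_pow] using pow_le_pow_left₀ ha0 ha 2
  nlinarith [mul_nonneg ha0 ha0, mul_nonneg (mul_nonneg ha0 ha0) ha0]

lemma specNorm_le_mul_specNorm_mul_of_vecNorm_le {m n k : ℕ} {B : Matrix (Fin m) (Fin n) ℝ}
    {c : ℝ} (hc : 0 ≤ c) (hB : ∀ z, vecNorm z ≤ c * vecNorm (B *ᵥ z))
    (M : Matrix (Fin n) (Fin k) ℝ) : specNorm M ≤ c * specNorm (B * M) :=
  specNorm_le_of_forall_vecNorm_mulVec_le M (mul_nonneg hc (specNorm_nonneg _)) fun v =>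
    calc vecNorm (M *ᵥ v) ≤ c * vecNorm ((B * M) *ᵥ v) := by
          rw [← Matrix.mulVec_mulVec]; exact hB _
      _ ≤ c * (specNorm (B * M) * vecNorm v) :=
          mul_le_mul_of_nonneg_left (vecNorm_mulVec_le _ _) hc
      _ = c * specNorm (B * M) * vecNorm v := (mul_assoc _ _ _).symm

section SmallPrincipalAngles

variable {n r k s : ℕ} {P : Matrix (Fin n) (Fin r) ℝ} {Pp : Matrix (Fin n) (Fin k) ℝ}
  {Q : Matrix (Fin n) (Fin s) ℝ}

/- `‖Pᵀ Q z‖² = ‖z‖² - ‖Ppᵀ Q z‖² ≥ (1 - a²) ‖z‖²` with `a = ‖Ppᵀ Q‖`, and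
`1 / √(1 - a²) ≤ 1 + a` as long as `a ≤ 1 / √2`. -/
lemma vecNorm_le_one_add_mul_vecNorm_transpose_mul_mulVec (hcomp : P * Pᵀ + Pp * Ppᵀ = 1)
    (hQ : Qᵀ * Q = 1) (ha : specNorm (Ppᵀ * Q) ≤ 1 / Real.sqrt 2) (z : Fin s → ℝ) :
    vecNorm z ≤ (1 + specNorm (Ppᵀ * Q)) * vecNorm ((Pᵀ * Q) *ᵥ z) := by
  set a := specNorm (Ppᵀ * Q)
  have ha0 : 0 ≤ a := specNorm_nonneg _
  have hpyth : vecNorm ((Pᵀ * Q) *ᵥ z) ^ 2 + vecNorm ((Ppᵀ * Q) *ᵥ z) ^ 2 = vecNorm z ^ 2 := by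
    simpa only [← Matrix.mulVec_mulVec, vecNorm_mulVec_of_transpose_mul_self hQ] using
      vecNorm_sq_add_vecNorm_sq hcomp (Q *ᵥ z)
  have hperp : vecNorm ((Ppᵀ * Q) *ᵥ z) ^ 2 ≤ a ^ 2 * vecNorm z ^ 2 := by
    rw [← mul_pow]
    exact pow_le_pow_left₀ (vecNorm_nonneg _) (vecNorm_mulVec_le _ _) 2
  refine (pow_le_pow_iff_left₀ (vecNorm_nonneg _)
    (mul_nonneg (by linarith) (vecNorm_nonneg _)) two_ne_zero).1 ?_
  calc vecNorm z ^ 2 ≤ (1 + a) ^ 2 * (1 - a ^ 2) * vecNorm z ^ 2 :=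
        le_mul_of_one_le_left (sq_nonneg _) (one_le_sq_one_add_mul_one_sub_sq ha0 ha)
    _ ≤ (1 + a) ^ 2 * vecNorm ((Pᵀ * Q) *ᵥ z) ^ 2 := by
        rw [mul_assoc]; gcongr; linarith
    _ = ((1 + a) * vecNorm ((Pᵀ * Q) *ᵥ z)) ^ 2 := (mul_pow _ _ _).symm

lemma specNorm_le_one_add_mul_specNorm_transpose_mul (hcomp : P * Pᵀ + Pp * Ppᵀ = 1)
    (hQ : Qᵀ * Q = 1) (ha : specNorm (Ppᵀ * Q) ≤ 1 / Real.sqrt 2) {l : ℕ}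
    (M : Matrix (Fin s) (Fin l) ℝ) :
    specNorm M ≤ (1 + specNorm (Ppᵀ * Q)) * specNorm (Pᵀ * Q * M) :=
  specNorm_le_mul_specNorm_mul_of_vecNorm_le (by linarith [specNorm_nonneg (Ppᵀ * Q)])
    (vecNorm_le_one_add_mul_vecNorm_transpose_mul_mulVec hcomp hQ ha) M

end SmallPrincipalAngles

lemma specNorm_le_specNorm_mul_add_specNorm_mul {m n r k : ℕ} (Δ : Matrix (Fin m) (Fin n) ℝ)
    {W : Matrix (Fin n) (Fin r) ℝ} {Wp : Matrix (Fin n) (Fin k) ℝ} (hW : Wᵀ * W = 1)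
    (hWp : Wpᵀ * Wp = 1) (hcomp : W * Wᵀ + Wp * Wpᵀ = 1) :
    specNorm Δ ≤ specNorm (Δ * W) + specNorm (Δ * Wp) := by
  have hsplit : Δ = Δ * W * Wᵀ + Δ * Wp * Wpᵀ := by
    rw [Matrix.mul_assoc, Matrix.mul_assoc, ← Matrix.mul_add, hcomp, Matrix.mul_one]
  have hWt : specNorm Wᵀ ≤ 1 := by
    rw [specNorm_transpose]; exact specNorm_le_one_of_transpose_mul_self hW
  have hWpt : specNorm Wpᵀ ≤ 1 := by
    rw [specNorm_transpose]; exact specNorm_le_one_of_transpose_mul_self hWp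
  calc specNorm Δ = specNorm (Δ * W * Wᵀ + Δ * Wp * Wpᵀ) := congrArg specNorm hsplit
    _ ≤ specNorm (Δ * W * Wᵀ) + specNorm (Δ * Wp * Wpᵀ) := specNorm_add_le _ _
    _ ≤ specNorm (Δ * W) + specNorm (Δ * Wp) :=
        add_le_add (specNorm_mul_le_of_specNorm_right_le_one _ hWt)
          (specNorm_mul_le_of_specNorm_right_le_one _ hWpt)

section FactoredPerturbation

variable {n1 n2 r k l : ℕ} {Xs Xt : Matrix (Fin n1) (Fin n2) ℝ}
  {Vs : Matrix (Fin n1) (Fin r) ℝ} {Vsp : Matrix (Fin n1) (Fin k) ℝ}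
  {Vt : Matrix (Fin n1) (Fin r) ℝ} {B : Matrix (Fin r) (Fin n2) ℝ}
  {Wp : Matrix (Fin n2) (Fin l) ℝ}

lemma specNorm_orthCompl_block_le (hcomp : Vs * Vsᵀ + Vsp * Vspᵀ = 1) (hVt : Vtᵀ * Vt = 1)
    (hXt : Xt = Vt * B) (hXs : Xs * Wp = 0) (ha : specNorm (Vspᵀ * Vt) ≤ 1 / Real.sqrt 2) :
    specNorm (Vspᵀ * Xt * Wp) ≤
      2 * specNorm (Vspᵀ * Vt) * specNorm (Vsᵀ * (Xt - Xs) * Wp) := by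
  set a := specNorm (Vspᵀ * Vt)
  have ha1 : a ≤ 1 := ha.trans <| by
    rw [div_le_one (by positivity)]; exact Real.one_le_sqrt.2 one_le_two
  have hperp : Vspᵀ * Xt * Wp = Vspᵀ * Vt * (B * Wp) := by
    rw [hXt]; simp only [Matrix.mul_assoc]
  have hpar : Vsᵀ * (Xt - Xs) * Wp = Vsᵀ * Vt * (B * Wp) := by
    rw [Matrix.mul_assoc, Matrix.sub_mul, hXs, sub_zero, hXt]; simp only [Matrix.mul_assoc]
  rw [hperp, hpar]
  calc specNorm (Vspᵀ * Vt * (B * Wp)) ≤ a * specNorm (B * Wp) := specNorm_mul_le _ _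
    _ ≤ a * ((1 + a) * specNorm (Vsᵀ * Vt * (B * Wp))) := mul_le_mul_of_nonneg_left
        (specNorm_le_one_add_mul_specNorm_transpose_mul hcomp hVt ha _) (specNorm_nonneg _)
    _ ≤ 2 * a * specNorm (Vsᵀ * Vt * (B * Wp)) := by
        nlinarith [mul_nonneg (mul_nonneg (specNorm_nonneg (Vspᵀ * Vt)) (sub_nonneg.2 ha1))
          (specNorm_nonneg (Vsᵀ * Vt * (B * Wp)))]

lemma specNorm_sub_mul_orthCompl_le (hcomp : Vs * Vsᵀ + Vsp * Vspᵀ = 1) (hVt : Vtᵀ * Vt = 1)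
    (hXt : Xt = Vt * B) (hXs : Xs * Wp = 0) (hWp : Wpᵀ * Wp = 1)
    (ha : specNorm (Vspᵀ * Vt) ≤ 1 / Real.sqrt 2) :
    specNorm ((Xt - Xs) * Wp) ≤ (1 + specNorm (Vspᵀ * Vt)) * specNorm (Vsᵀ * (Xt - Xs)) := by
  have hΔ : (Xt - Xs) * Wp = Vt * (B * Wp) := by
    rw [Matrix.sub_mul, hXs, sub_zero, hXt, Matrix.mul_assoc]
  have hpar : Vsᵀ * Vt * (B * Wp) = Vsᵀ * (Xt - Xs) * Wp := by
    rw [Matrix.mul_assoc Vsᵀ (Xt - Xs), hΔ, Matrix.mul_assoc]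
  have ha0 : 0 ≤ 1 + specNorm (Vspᵀ * Vt) := by linarith [specNorm_nonneg (Vspᵀ * Vt)]
  calc specNorm ((Xt - Xs) * Wp) ≤ specNorm (B * Wp) := by
        rw [hΔ]
        exact specNorm_mul_le_of_specNorm_left_le_one (specNorm_le_one_of_transpose_mul_self hVt) _
    _ ≤ (1 + specNorm (Vspᵀ * Vt)) * specNorm (Vsᵀ * (Xt - Xs) * Wp) := by
        rw [← hpar]; exact specNorm_le_one_add_mul_specNorm_transpose_mul hcomp hVt ha _
    _ ≤ (1 + specNorm (Vspᵀ * Vt)) * specNorm (Vsᵀ * (Xt - Xs)) := by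
        exact mul_le_mul_of_nonneg_left (specNorm_mul_le_of_specNorm_right_le_one _
          (specNorm_le_one_of_transpose_mul_self hWp)) ha0

end FactoredPerturbation

/-- Operator-norm bounds on the `(⊥,⊥)` block of `X_t` and on
`X_t − X⋆` via its projections. -/
theorem statement6 {n1 n2 r : ℕ}
    (Xstar Xt : Matrix (Fin n1) (Fin n2) ℝ)
    (Vs : Matrix (Fin n1) (Fin r) ℝ) (Ss : Matrix (Fin r) (Fin r) ℝ)
    (Ws : Matrix (Fin n2) (Fin r) ℝ) (hXstar : IsCompactSVD Xstar Vs Ss Ws)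
    (Vsp : Matrix (Fin n1) (Fin (n1 - r)) ℝ) (hVsp : IsOrthComplement Vs Vsp)
    (Wsp : Matrix (Fin n2) (Fin (n2 - r)) ℝ) (hWsp : IsOrthComplement Ws Wsp)
    (Vt : Matrix (Fin n1) (Fin r) ℝ) (St : Matrix (Fin r) (Fin r) ℝ)
    (Wt : Matrix (Fin n2) (Fin r) ℝ) (hXt : IsCompactSVD Xt Vt St Wt)
    (hproj : max (specNorm (Vspᵀ * Vt)) (specNorm (Wspᵀ * Wt)) ≤ 1 / Real.sqrt 2) :
    specNorm (Vspᵀ * Xt * Wsp) ≤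
      2 * specNorm (Vspᵀ * Vt) * specNorm (Vsᵀ * (Xt - Xstar) * Wsp) ∧
    specNorm (Vspᵀ * Xt * Wsp) ≤
      2 * specNorm (Wspᵀ * Wt) * specNorm (Vspᵀ * (Xt - Xstar) * Ws) ∧
    specNorm (Xt - Xstar) ≤
      (1 + specNorm (Wspᵀ * Wt)) * specNorm ((Xt - Xstar) * Ws)
        + (1 + specNorm (Vspᵀ * Vt)) * specNorm (Vsᵀ * (Xt - Xstar)) := by
  obtain ⟨hXs, hVs, hWs, -, -⟩ := hXstar
  obtain ⟨hXt, hVt, hWt, -, -⟩ := hXt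
  have hVcomp := hVsp.mul_transpose_add_mul_transpose hVs
  have hWcomp := hWsp.mul_transpose_add_mul_transpose hWs
  have hXsW : Xstar * Wsp = 0 := by rw [hXs, Matrix.mul_assoc, hWsp.2, Matrix.mul_zero]
  have hXsV : Xstarᵀ * Vsp = 0 := by
    simp only [hXs, Matrix.transpose_mul, Matrix.mul_assoc, hVsp.2, Matrix.mul_zero]
  have hXtV : Xt = Vt * (St * Wtᵀ) := by rw [hXt, Matrix.mul_assoc]
  have hXtW : Xtᵀ = Wt * (Vt * St)ᵀ := by
    rw [hXt, Matrix.transpose_mul, Matrix.transpose_transpose]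
  refine ⟨specNorm_orthCompl_block_le hVcomp hVt hXtV hXsW (le_of_max_le_left hproj), ?_, ?_⟩
  · have h := specNorm_orthCompl_block_le hWcomp hWt hXtW hXsV (le_of_max_le_right hproj)
    rw [← specNorm_transpose (Vspᵀ * Xt * Wsp), ← specNorm_transpose (Vspᵀ * (Xt - Xstar) * Ws)]
    simpa only [Matrix.transpose_mul, Matrix.transpose_sub, Matrix.transpose_transpose,
      Matrix.mul_assoc] using h
  · calc specNorm (Xt - Xstar)
        ≤ specNorm ((Xt - Xstar) * Ws) + specNorm ((Xt - Xstar) * Wsp) :=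
          specNorm_le_specNorm_mul_add_specNorm_mul _ hWs hWsp.1 hWcomp
      _ ≤ (1 + specNorm (Wspᵀ * Wt)) * specNorm ((Xt - Xstar) * Ws)
          + (1 + specNorm (Vspᵀ * Vt)) * specNorm (Vsᵀ * (Xt - Xstar)) := by
          gcongr
          · exact le_mul_of_one_le_left (specNorm_nonneg _)
              (le_add_of_nonneg_right (specNorm_nonneg _))
          · exact specNorm_sub_mul_orthCompl_le hVcomp hVt hXtV hXsW hWsp.1
              (le_of_max_le_left hproj)
end
end

section
/- Let 𝒜 be a measurement operator satisfying the rank-(4r+1) RIP with constant δ ≤ 1, let w ∈ ℝ^{n1}, v ∈ ℝ^{n2} be unit vectors with associated virtual operator 𝒜_{(w,v)}, and set c' := max{δ, 8√(2r(n1+n2)/m)}. Let X_t ∈ ℝ^{n1×n2} and X' ∈ ℝ^{n1×n2} both have rank r, and let X' have compact SVD X' = V'Σ'(W')ᵀ. Then ‖[(𝒜*_{(w,v)}𝒜_{(w,v)} − I)(X' − X_t)]·W'‖_F ≤ 2c'·‖X' − X_t‖_F and ‖(V')ᵀ·[(𝒜*_{(w,v)}𝒜_{(w,v)} − I)(X'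 − X_t)]‖_F ≤ 2c'·‖X' − X_t‖_F. -/
/-!
The virtual operator reads the `wvᵀ`-coordinate of `Z` exactly and measures the rest,
`𝒫_{wvᵀ,⊥}(Z)`, through `𝒜`; since `𝒫_{wvᵀ,⊥}` raises the rank by at most one, the rank-`(k+1)`
RIP of `𝒜` gives a rank-`k` RIP for `𝒜_{(w,v)}` with the same constant. Polarization, applied to
`‖Q‖ Z ± ‖Z‖ Q`, turns it into `⟨(𝒜*_{(w,v)}𝒜_{(w,v)} − I)Z, Q⟩ ≤ δ‖Z‖‖Q‖` whenever
`rank Z + rank Q ≤ k`. For `M := (𝒜*_{(w,v)}𝒜_{(w,v)} − I)(X' − X_t)` the rank-`r` test matrix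
`Q := M W' W'ᵀ` satisfies `⟨M, Q⟩ = ‖Q‖² = ‖M W'‖²`, whence `‖M W'‖ ≤ δ‖X' − X_t‖ ≤ c'‖X' − X_t‖`;
the bound for `V'ᵀ M` is the same statement for `Mᵀ`.
-/

open Matrix MeasureTheory ProbabilityTheory
open scoped BigOperators

noncomputable section

/-- Projection onto the direction `w vᵀ` : `𝒫_{wvᵀ}(Z) = ⟨wvᵀ, Z⟩ wvᵀ`. -/
def projWV {n1 n2 : ℕ} (w : Fin n1 → ℝ) (v : Fin n2 → ℝ)
    (Z : Matrix (Fin n1) (Fin n2) ℝ) : Matrix (Fin n1) (Fin n2) ℝ :=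
  frobInner (Matrix.vecMulVec w v) Z • Matrix.vecMulVec w v

/-- `𝒫_{wvᵀ,⊥}(Z) = Z − ⟨wvᵀ, Z⟩ wvᵀ`. -/
def projWVperp {n1 n2 : ℕ} (w : Fin n1 → ℝ) (v : Fin n2 → ℝ)
    (Z : Matrix (Fin n1) (Fin n2) ℝ) : Matrix (Fin n1) (Fin n2) ℝ :=
  Z - projWV w v Z

/-- The virtual measurement operator `𝒜_{(w,v)} : ℝ^{n1×n2} → ℝ^{m+1}`. -/
def virtOp {n1 n2 m : ℕ} (A : Fin m → Matrix (Fin n1) (Fin n2) ℝ)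
    (w : Fin n1 → ℝ) (v : Fin n2 → ℝ) (Z : Matrix (Fin n1) (Fin n2) ℝ) :
    Fin (m + 1) → ℝ :=
  fun i => if h : (i : ℕ) < m then
      (Real.sqrt m)⁻¹ * frobInner (projWVperp w v (A ⟨(i : ℕ), h⟩)) Z
    else frobInner (Matrix.vecMulVec w v) Z

/-- Adjoint of the virtual measurement operator. -/
def virtAdj {n1 n2 m : ℕ} (A : Fin m → Matrix (Fin n1) (Fin n2) ℝ)
    (w : Fin n1 → ℝ) (v : Fin n2 → ℝ) (u : Fin (m + 1) → ℝ) :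
    Matrix (Fin n1) (Fin n2) ℝ :=
  (Real.sqrt m)⁻¹ • (∑ i : Fin m, u i.castSucc • projWVperp w v (A i))
    + u (Fin.last m) • Matrix.vecMulVec w v

/-- The composite operator `𝒜*_{(w,v)} 𝒜_{(w,v)}`. -/
def virtAA {n1 n2 m : ℕ} (A : Fin m → Matrix (Fin n1) (Fin n2) ℝ)
    (w : Fin n1 → ℝ) (v : Fin n2 → ℝ) (Z : Matrix (Fin n1) (Fin n2) ℝ) :
    Matrix (Fin n1) (Fin n2) ℝ :=
  virtAdj A w v (virtOp A w v Z)

end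

namespace Matrix

variable {K ι κ : Type*} [Field K] [Fintype κ]

theorem rank_smul_le (c : K) (A : Matrix ι κ K) : (c • A).rank ≤ A.rank := by
  have hsmul : (c • A).mulVecLin = c • A.mulVecLin :=
    LinearMap.ext fun x => Matrix.smul_mulVec c A x
  rw [Matrix.rank, Matrix.rank, hsmul]
  exact Submodule.finrank_mono (LinearMap.range_smul_le_range _ _)

theorem rank_add_le (A B : Matrix ι κ K) : (A + B).rank ≤ A.rank + B.rank := by
  rw [Matrix.rank, Matrix.rank, Matrix.rank, Matrix.mulVecLin_add]
  exact (Submodule.finrank_mono (LinearMap.range_add_le _ _)).trans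
    (Submodule.finrank_add_le_finrank_add_finrank _ _)

theorem rank_sub_le (A B : Matrix ι κ K) : (A - B).rank ≤ A.rank + B.rank := by
  rw [sub_eq_add_neg, ← neg_one_smul K B]
  grw [rank_add_le, rank_smul_le]

end Matrix

section Frobenius

variable {n1 n2 : ℕ} (A B C : Matrix (Fin n1) (Fin n2) ℝ)

theorem frobInner_comm : frobInner A B = frobInner B A := by
  rw [frobInner, frobInner, ← Matrix.trace_transpose, Matrix.transpose_mul,
    Matrix.transpose_transpose]

@[simp] theorem frobInner_add_right : frobInner A (B + C) = frobInner A B + frobInner A C := by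
  simp [frobInner, Matrix.mul_add]

@[simp] theorem frobInner_sub_right : frobInner A (B - C) = frobInner A B - frobInner A C := by
  simp [frobInner, Matrix.mul_sub]

@[simp] theorem frobInner_smul_right (c : ℝ) : frobInner A (c • B) = c * frobInner A B := by
  simp [frobInner]

@[simp] theorem frobInner_add_left : frobInner (A + B) C = frobInner A C + frobInner B C := by
  simp [frobInner, Matrix.add_mul]

@[simp] theorem frobInner_sub_left : frobInner (A - B) C = frobInner A C - frobInner B C := by
  simp [frobInner, Matrix.sub_mul]

@[simp] theorem frobInner_smul_left (c : ℝ) : frobInner (c • A) B = c * frobInner A B := by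
  simp [frobInner]

@[simp] theorem frobInner_zero_right : frobInner A 0 = 0 := by
  simp [frobInner]

theorem frobInner_sum_left {ι : Type*} (s : Finset ι) (f : ι → Matrix (Fin n1) (Fin n2) ℝ) :
    frobInner (∑ i ∈ s, f i) A = ∑ i ∈ s, frobInner (f i) A := by
  simp [frobInner, Matrix.transpose_sum, Matrix.sum_mul, Matrix.trace_sum]

theorem frobInner_transpose_left (D : Matrix (Fin n2) (Fin n1) ℝ) :
    frobInner Aᵀ D = frobInner A Dᵀ := by
  rw [frobInner, frobInner, Matrix.transpose_transpose, ← Matrix.trace_transpose,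
    Matrix.transpose_mul, Matrix.trace_mul_comm]

theorem frobInner_self_eq_sum : frobInner A A = ∑ i, ∑ j, A i j ^ 2 := by
  simp only [frobInner, Matrix.trace, Matrix.diag, Matrix.mul_apply, Matrix.transpose_apply, sq]
  exact Finset.sum_comm

theorem frobNorm_nonneg : 0 ≤ frobNorm A := Real.sqrt_nonneg _

theorem frobNorm_sq : frobNorm A ^ 2 = frobInner A A := by
  rw [frobNorm, frobInner_self_eq_sum, Real.sq_sqrt (by positivity)]

theorem frobNorm_transpose : frobNorm Aᵀ = frobNorm A := by
  rw [frobNorm, frobNorm, Finset.sum_comm]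
  rfl

theorem eq_zero_of_frobNorm_eq_zero (h : frobNorm A = 0) : A = 0 := by
  rw [frobNorm, Real.sqrt_eq_zero (by positivity)] at h
  ext i j
  have hi := (Finset.sum_eq_zero_iff_of_nonneg (fun i _ => by positivity)).mp h i
    (Finset.mem_univ i)
  simpa using (Finset.sum_eq_zero_iff_of_nonneg (fun j _ => by positivity)).mp hi j
    (Finset.mem_univ j)

end Frobenius

theorem vecNorm_sq_s14 {m : ℕ} (u : Fin m → ℝ) : vecNorm u ^ 2 = ∑ i, u i ^ 2 :=
  Real.sq_sqrt (by positivity)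

section VirtualOperator

variable {n1 n2 m : ℕ} (A : Fin m → Matrix (Fin n1) (Fin n2) ℝ) (w : Fin n1 → ℝ) (v : Fin n2 → ℝ)

theorem frobInner_projWVperp_left (B Z : Matrix (Fin n1) (Fin n2) ℝ) :
    frobInner (projWVperp w v B) Z = frobInner B (projWVperp w v Z) := by
  simp only [projWVperp, projWV, frobInner_sub_left, frobInner_sub_right, frobInner_smul_left,
    frobInner_smul_right, frobInner_comm B (vecMulVec w v)]
  ring

theorem rank_projWVperp_le (Z : Matrix (Fin n1) (Fin n2) ℝ) :
    (projWVperp w v Z).rank ≤ Z.rank + 1 :=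
  (Matrix.rank_sub_le _ _).trans <| by
    grw [projWV, ← Matrix.smul_vecMulVec, Matrix.rank_vecMulVec_le]

theorem frobInner_vecMulVec_self (hw : vecNorm w = 1) (hv : vecNorm v = 1) :
    frobInner (vecMulVec w v) (vecMulVec w v) = 1 := by
  have hw2 : ∑ i, w i ^ 2 = 1 := by rw [← vecNorm_sq_s14, hw, one_pow]
  have hv2 : ∑ j, v j ^ 2 = 1 := by rw [← vecNorm_sq_s14, hv, one_pow]
  simp only [frobInner_self_eq_sum, vecMulVec_apply, mul_pow, ← Finset.mul_sum, ← Finset.sum_mul,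
    hw2, hv2, one_mul]

theorem frobInner_self_eq_projWVperp_add_sq (hw : vecNorm w = 1) (hv : vecNorm v = 1)
    (Z : Matrix (Fin n1) (Fin n2) ℝ) :
    frobInner Z Z = frobInner (projWVperp w v Z) (projWVperp w v Z)
      + frobInner (vecMulVec w v) Z ^ 2 := by
  simp only [projWVperp, projWV, frobInner_sub_left, frobInner_sub_right, frobInner_smul_left,
    frobInner_smul_right, frobInner_vecMulVec_self w v hw hv, frobInner_comm Z (vecMulVec w v)]
  ring

theorem virtOp_castSucc (Z : Matrix (Fin n1) (Fin n2) ℝ) (i : Fin m) :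
    virtOp A w v Z i.castSucc = (Real.sqrt m)⁻¹ * frobInner (projWVperp w v (A i)) Z := by
  simp [virtOp]

theorem virtOp_last (Z : Matrix (Fin n1) (Fin n2) ℝ) :
    virtOp A w v Z (Fin.last m) = frobInner (vecMulVec w v) Z := by
  simp [virtOp]

theorem virtOp_add (Y₁ Y₂ : Matrix (Fin n1) (Fin n2) ℝ) :
    virtOp A w v (Y₁ + Y₂) = virtOp A w v Y₁ + virtOp A w v Y₂ := by
  ext j
  induction j using Fin.lastCases with
  | last => simp only [Pi.add_apply, virtOp_last, frobInner_add_right]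
  | cast i =>
    simp only [Pi.add_apply, virtOp_castSucc, frobInner_add_right]
    ring

theorem virtOp_smul (c : ℝ) (Y : Matrix (Fin n1) (Fin n2) ℝ) :
    virtOp A w v (c • Y) = c • virtOp A w v Y := by
  ext j
  induction j using Fin.lastCases with
  | last => simp only [Pi.smul_apply, smul_eq_mul, virtOp_last, frobInner_smul_right]
  | cast i =>
    simp only [Pi.smul_apply, smul_eq_mul, virtOp_castSucc, frobInner_smul_right]
    ring

theorem virtOp_zero : virtOp A w v 0 = 0 := by
  simpa using virtOp_smul A w v 0 0

theorem virtOp_sub (Y₁ Y₂ : Matrix (Fin n1) (Fin n2) ℝ) :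
    virtOp A w v (Y₁ - Y₂) = virtOp A w v Y₁ - virtOp A w v Y₂ := by
  rw [sub_eq_add_neg, ← neg_one_smul ℝ Y₂, virtOp_add, virtOp_smul, neg_one_smul,
    ← sub_eq_add_neg]

theorem frobInner_virtAA (Z Y : Matrix (Fin n1) (Fin n2) ℝ) :
    frobInner (virtAA A w v Z) Y = ∑ j, virtOp A w v Z j * virtOp A w v Y j := by
  simp only [virtAA, virtAdj, frobInner_add_left, frobInner_smul_left, frobInner_sum_left,
    Fin.sum_univ_castSucc, virtOp_last, virtOp_castSucc, Finset.mul_sum]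
  congr 1
  exact Finset.sum_congr rfl fun i _ => by ring

theorem sum_sq_virtOp (Z : Matrix (Fin n1) (Fin n2) ℝ) :
    ∑ j, virtOp A w v Z j ^ 2
      = vecNorm (measOp A (projWVperp w v Z)) ^ 2 + frobInner (vecMulVec w v) Z ^ 2 := by
  simp only [Fin.sum_univ_castSucc, virtOp_last, virtOp_castSucc, vecNorm_sq_s14, measOp,
    frobInner_projWVperp_left]

theorem virtAA_smul (c : ℝ) (Z : Matrix (Fin n1) (Fin n2) ℝ) :
    virtAA A w v (c • Z) = c • virtAA A w v Z := by
  simp [virtAA, virtAdj, virtOp_smul, Finset.smul_sum, smul_smul, smul_add, mul_comm, mul_assoc]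

end VirtualOperator

section RIP

variable {n1 n2 m k : ℕ} {A : Fin m → Matrix (Fin n1) (Fin n2) ℝ} {δ : ℝ}
  {w : Fin n1 → ℝ} {v : Fin n2 → ℝ}

theorem HasRIP.sum_sq_virtOp_bounds (hRIP : HasRIP A (k + 1) δ) (hδ : 0 ≤ δ)
    (hw : vecNorm w = 1) (hv : vecNorm v = 1) {Y : Matrix (Fin n1) (Fin n2) ℝ}
    (hY : Y.rank ≤ k) :
    (1 - δ) * frobInner Y Y ≤ ∑ j, virtOp A w v Y j ^ 2 ∧
      ∑ j, virtOp A w v Y j ^ 2 ≤ (1 + δ) * frobInner Y Y := by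
  obtain ⟨hlow, hupp⟩ := hRIP (projWVperp w v Y) ((rank_projWVperp_le w v Y).trans (by omega))
  rw [frobNorm_sq] at hlow hupp
  rw [sum_sq_virtOp, frobInner_self_eq_projWVperp_add_sq w v hw hv Y]
  have hc := sq_nonneg (frobInner (vecMulVec w v) Y)
  constructor <;> nlinarith

theorem HasRIP.frobInner_virtAA_sub_le_half (hRIP : HasRIP A (k + 1) δ) (hδ : 0 ≤ δ)
    (hw : vecNorm w = 1) (hv : vecNorm v = 1) {Z Q : Matrix (Fin n1) (Fin n2) ℝ}
    (hZQ : Z.rank + Q.rank ≤ k) :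
    frobInner (virtAA A w v Z - Z) Q ≤ δ / 2 * (frobInner Z Z + frobInner Q Q) := by
  have hplus := (hRIP.sum_sq_virtOp_bounds hδ hw hv ((Matrix.rank_add_le Z Q).trans hZQ)).2
  have hminus := (hRIP.sum_sq_virtOp_bounds hδ hw hv ((Matrix.rank_sub_le Z Q).trans hZQ)).1
  have hpolar : ∑ j, virtOp A w v (Z + Q) j ^ 2 - ∑ j, virtOp A w v (Z - Q) j ^ 2
      = 4 * frobInner (virtAA A w v Z) Q := by
    rw [frobInner_virtAA, Finset.mul_sum, ← Finset.sum_sub_distrib]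
    refine Finset.sum_congr rfl fun j _ => ?_
    rw [virtOp_add, virtOp_sub, Pi.add_apply, Pi.sub_apply]
    ring
  simp only [frobInner_add_left, frobInner_add_right, frobInner_sub_left, frobInner_sub_right,
    frobInner_comm Q Z] at hplus hminus ⊢
  linarith

theorem HasRIP.frobInner_virtAA_sub_le (hRIP : HasRIP A (k + 1) δ) (hδ : 0 ≤ δ)
    (hw : vecNorm w = 1) (hv : vecNorm v = 1) {Z Q : Matrix (Fin n1) (Fin n2) ℝ}
    (hZQ : Z.rank + Q.rank ≤ k) :
    frobInner (virtAA A w v Z - Z) Q ≤ δ * (frobNorm Z * frobNorm Q) := by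
  obtain ha | ha := (frobNorm_nonneg Z).eq_or_lt
  · rw [← ha]
    simp [eq_zero_of_frobNorm_eq_zero Z ha.symm, frobInner_virtAA, virtOp_zero]
  obtain hb | hb := (frobNorm_nonneg Q).eq_or_lt
  · rw [← hb]
    simp [eq_zero_of_frobNorm_eq_zero Q hb.symm]
  have h := hRIP.frobInner_virtAA_sub_le_half hδ hw hv (Z := frobNorm Q • Z)
    (Q := frobNorm Z • Q) (by grw [Matrix.rank_smul_le, Matrix.rank_smul_le]; exact hZQ)
  rw [virtAA_smul, ← smul_sub] at h
  simp only [frobInner_smul_left, frobInner_smul_right] at h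
  rw [← frobNorm_sq Z, ← frobNorm_sq Q] at h
  refine le_of_mul_le_mul_left ?_ (mul_pos ha hb)
  linear_combination h

end RIP

theorem frobNorm_mul_le_of_frobInner_le {n1 n2 r : ℕ} {M : Matrix (Fin n1) (Fin n2) ℝ}
    {W : Matrix (Fin n2) (Fin r) ℝ} (hW : Wᵀ * W = 1) {ε : ℝ} (hε : 0 ≤ ε)
    (hM : ∀ Q : Matrix (Fin n1) (Fin n2) ℝ, Q.rank ≤ r → frobInner M Q ≤ ε * frobNorm Q) :
    frobNorm (M * W) ≤ ε := by
  set Q := M * W * Wᵀ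
  have hMQ : frobInner M Q = frobNorm (M * W) ^ 2 := by
    rw [frobNorm_sq, frobInner, frobInner, ← Matrix.mul_assoc, Matrix.trace_mul_comm,
      Matrix.transpose_mul, Matrix.mul_assoc]
  have hQQ : frobNorm Q = frobNorm (M * W) := by
    refine (pow_left_inj₀ (frobNorm_nonneg _) (frobNorm_nonneg _) two_ne_zero).mp ?_
    rw [frobNorm_sq, frobNorm_sq, frobInner, frobInner, Matrix.transpose_mul, Matrix.mul_assoc,
      Matrix.trace_mul_comm, Matrix.mul_assoc, Matrix.mul_assoc, Matrix.transpose_transpose, hW,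
      Matrix.mul_one]
  have hQ := hM Q ((Matrix.rank_mul_le_right _ _).trans (Matrix.rank_le_height _))
  rw [hMQ, hQQ] at hQ
  nlinarith [frobNorm_nonneg (M * W)]

theorem frobNorm_transpose_mul_le_of_frobInner_le {n1 n2 r : ℕ} {M : Matrix (Fin n1) (Fin n2) ℝ}
    {V : Matrix (Fin n1) (Fin r) ℝ} (hV : Vᵀ * V = 1) {ε : ℝ} (hε : 0 ≤ ε)
    (hM : ∀ Q : Matrix (Fin n1) (Fin n2) ℝ, Q.rank ≤ r → frobInner M Q ≤ ε * frobNorm Q) :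
    frobNorm (Vᵀ * M) ≤ ε := by
  rw [← frobNorm_transpose, Matrix.transpose_mul, Matrix.transpose_transpose]
  refine frobNorm_mul_le_of_frobInner_le hV hε fun Q hQ => ?_
  rw [frobInner_transpose_left, ← frobNorm_transpose Q]
  exact hM Qᵀ (by rwa [Matrix.rank_transpose])

theorem statement14_general {n1 n2 m r : ℕ}
    (A : Fin m → Matrix (Fin n1) (Fin n2) ℝ) (δ c' : ℝ)
    (hδ0 : 0 < δ) (hRIP : HasRIP A (4 * r + 1) δ)
    (w : Fin n1 → ℝ) (v : Fin n2 → ℝ) (hw : vecNorm w = 1) (hv : vecNorm v = 1)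
    (hc' : c' = max δ (8 * Real.sqrt (2 * (r : ℝ) * ((n1 : ℝ) + n2) / m)))
    (Xt X' : Matrix (Fin n1) (Fin n2) ℝ) (hXt : Xt.rank = r)
    (V' : Matrix (Fin n1) (Fin r) ℝ) (S' : Matrix (Fin r) (Fin r) ℝ)
    (W' : Matrix (Fin n2) (Fin r) ℝ) (hX' : IsCompactSVD X' V' S' W') :
    frobNorm ((virtAA A w v (X' - Xt) - (X' - Xt)) * W') ≤ 2 * c' * frobNorm (X' - Xt) ∧
    frobNorm (V'ᵀ * (virtAA A w v (X' - Xt) - (X' - Xt))) ≤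
      2 * c' * frobNorm (X' - Xt) := by
  obtain ⟨hX'eq, hV', hW', -, -⟩ := hX'
  have hrankX' : X'.rank ≤ r := by
    rw [hX'eq]
    exact (Matrix.rank_mul_le_left _ _).trans
      ((Matrix.rank_mul_le_left _ _).trans (Matrix.rank_le_width V'))
  have hrankZ : (X' - Xt).rank ≤ 2 * r := (Matrix.rank_sub_le _ _).trans (by omega)
  have hM : ∀ Q : Matrix (Fin n1) (Fin n2) ℝ, Q.rank ≤ r →
      frobInner (virtAA A w v (X' - Xt) - (X' - Xt)) Q ≤ δ * frobNorm (X' - Xt) * frobNorm Q :=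
    fun Q hQ => by
      rw [mul_assoc]
      exact hRIP.frobInner_virtAA_sub_le hδ0.le hw hv (by omega)
  have hε : 0 ≤ δ * frobNorm (X' - Xt) := mul_nonneg hδ0.le (frobNorm_nonneg _)
  have hδc : δ * frobNorm (X' - Xt) ≤ 2 * c' * frobNorm (X' - Xt) := by
    have : δ ≤ c' := hc' ▸ le_max_left _ _
    exact mul_le_mul_of_nonneg_right (by linarith) (frobNorm_nonneg _)
  exact ⟨(frobNorm_mul_le_of_frobInner_le hW' hε hM).trans hδc,
    (frobNorm_transpose_mul_le_of_frobInner_le hV' hε hM).trans hδc⟩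

/-- Virtual-operator RIP-type bound: for rank-`r` matrices
`X_t, X'` with `X' = V'Σ'(W')ᵀ`,
`‖[(𝒜*_{(w,v)}𝒜_{(w,v)} − I)(X' − X_t)] W'‖_F ≤ 2c'‖X' − X_t‖_F` and the analogous
bound with `(V')ᵀ` on the left. -/
theorem statement14 {n1 n2 m r : ℕ}
    (A : Fin m → Matrix (Fin n1) (Fin n2) ℝ) (δ c' : ℝ)
    (hδ0 : 0 < δ) (hδ1 : δ ≤ 1) (hRIP : HasRIP A (4 * r + 1) δ)
    (w : Fin n1 → ℝ) (v : Fin n2 → ℝ) (hw : vecNorm w = 1) (hv : vecNorm v = 1)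
    (hc' : c' = max δ (8 * Real.sqrt (2 * (r : ℝ) * ((n1 : ℝ) + n2) / m)))
    (Xt X' : Matrix (Fin n1) (Fin n2) ℝ) (hXt : Xt.rank = r)
    (V' : Matrix (Fin n1) (Fin r) ℝ) (S' : Matrix (Fin r) (Fin r) ℝ)
    (W' : Matrix (Fin n2) (Fin r) ℝ) (hX' : IsCompactSVD X' V' S' W') :
    frobNorm ((virtAA A w v (X' - Xt) - (X' - Xt)) * W') ≤ 2 * c' * frobNorm (X' - Xt) ∧
    frobNorm (V'ᵀ * (virtAA A w v (X' - Xt) - (X' - Xt))) ≤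
      2 * c' * frobNorm (X' - Xt) :=
  statement14_general A δ c' hδ0 hRIP w v hw hv hc' Xt X' hXt V' S' W' hX'
end

section
/- Let X⋆ ∈ ℝ^{n1×n2}, let L_t ∈ ℝ^{n1×r} and R_t ∈ ℝ^{n2×r} both have rank r, let X_t = L_tR_tᵀ have compact SVD X_t = V_tΣ_tW_tᵀ, set y = 𝒜(X⋆) and M_t := (𝒜*𝒜)(X⋆ − X_t), and let L_{t+1}, R_{t+1} be produced by one ScaledGD update with step size μ. Then L_t(L_tᵀL_t)^{-1}L_tᵀ = V_tV_tᵀ, R_t(R_tᵀR_t)^{-1}R_tᵀ = W_tW_tᵀ, R_t(R_tᵀR_t)^{-1}(L_tᵀL_t)^{-1}L_tᵀ = W_tΣ_t^{-1}V_tᵀ, and consequently L_{t+1}R_{t+1}ᵀ = X_t + μ·M_tW_tW_tᵀ + μ·V_tV_tᵀM_t + μ²·M_tW_tΣ_t^{-1}V_tᵀM_t. -/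
open Matrix MeasureTheory ProbabilityTheory
open scoped BigOperators

noncomputable section

/-- One step of ScaledGD:
`L' = L + μ 𝒜*(y − 𝒜(LRᵀ)) R (RᵀR)⁻¹`, `R' = R + μ 𝒜*(y − 𝒜(LRᵀ))ᵀ L (LᵀL)⁻¹`. -/
def ScaledGDStep {n1 n2 r m : ℕ} (A : Fin m → Matrix (Fin n1) (Fin n2) ℝ)
    (y : Fin m → ℝ) (μ : ℝ)
    (L : Matrix (Fin n1) (Fin r) ℝ) (R : Matrix (Fin n2) (Fin r) ℝ)
    (L' : Matrix (Fin n1) (Fin r) ℝ) (R' : Matrix (Fin n2) (Fin r) ℝ) : Prop :=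
  L' = L + μ • (measAdj A (y - measOp A (L * Rᵀ)) * R * (Rᵀ * R)⁻¹) ∧
  R' = R + μ • ((measAdj A (y - measOp A (L * Rᵀ)))ᵀ * L * (Lᵀ * L)⁻¹)

end

/-!
Since `R` has full column rank, `L = (L Rᵀ) R (RᵀR)⁻¹` has its columns in the column
space of `V_t`, so `L = V_t Q` with `Q = V_tᵀ L`; likewise `R = W_t P`. Full rank of `L`, `R`
makes `Q`, `P` invertible, and `Σ_t = Q Pᵀ`. The three projection identities are then
cancellations of `Q` and `P`, and expanding the product of the two updated factors gives the
last identity.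
-/

namespace Matrix

variable {K : Type*} {m n p r : Type*} [Fintype m] [Fintype n] [Fintype r] [DecidableEq r]

theorem isUnit_of_rank_eq_card [Field K] (Q : Matrix r r K) (h : Q.rank = Fintype.card r) :
    IsUnit Q := by
  rw [← mulVec_surjective_iff_isUnit]
  refine (LinearMap.range_eq_top (f := Q.mulVecLin)).mp (Submodule.eq_top_of_finrank_eq ?_)
  rw [← rank, h, Module.finrank_fintype_fun_eq_card]

theorem isUnit_det_transpose_mul_self_of_rank_eq_card [Field K] [LinearOrder K]
    [IsStrictOrderedRing K] (A : Matrix m r K) (h : A.rank = Fintype.card r) :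
    IsUnit (Aᵀ * A).det :=
  (isUnit_iff_isUnit_det _).mp <| isUnit_of_rank_eq_card _ <| by rw [rank_transpose_mul_self, h]

section CommRing

variable [CommRing K]

theorem isUnit_det_of_isUnit_det_transpose_mul_self {Q : Matrix r r K}
    (h : IsUnit (Qᵀ * Q).det) : IsUnit Q.det := by
  rw [det_mul, det_transpose] at h
  exact isUnit_of_mul_isUnit_left h

theorem transpose_mul_self_mul_of_transpose_mul_self_eq_one {V : Matrix n r K}
    (hV : Vᵀ * V = 1) (Q : Matrix r p K) : (V * Q)ᵀ * (V * Q) = Qᵀ * Q := by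
  rw [transpose_mul, Matrix.mul_assoc, ← Matrix.mul_assoc Vᵀ, hV, Matrix.one_mul]

theorem mul_transpose_mul_eq_of_mul_transpose_eq {V : Matrix n r K} (hV : Vᵀ * V = 1)
    {L : Matrix n r K} {R : Matrix m r K} {B : Matrix r m K} (hLR : L * Rᵀ = V * B)
    (hR : IsUnit (Rᵀ * R).det) : V * (Vᵀ * L) = L := by
  have hL : L = V * (B * R * (Rᵀ * R)⁻¹) := by
    rw [← mul_nonsing_inv_cancel_right (Rᵀ * R) L hR, ← Matrix.mul_assoc, hLR]
    simp only [Matrix.mul_assoc]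
  rw [hL, ← Matrix.mul_assoc Vᵀ, hV, Matrix.one_mul]

theorem mul_inv_transpose_mul_self_mul_transpose {V : Matrix n r K} (hV : Vᵀ * V = 1)
    {Q : Matrix r r K} (hQ : IsUnit Q.det) :
    (V * Q) * ((V * Q)ᵀ * (V * Q))⁻¹ * (V * Q)ᵀ = V * Vᵀ := by
  have hQT : IsUnit Qᵀ.det := by rwa [det_transpose]
  rw [transpose_mul_self_mul_of_transpose_mul_self_eq_one hV, mul_inv_rev, transpose_mul]
  simp only [Matrix.mul_assoc]
  rw [nonsing_inv_mul_cancel_left Qᵀ Vᵀ hQT, mul_nonsing_inv_cancel_left Q Vᵀ hQ]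

theorem mul_inv_transpose_mul_self_mul_inv_transpose_mul_self_mul_transpose
    {V : Matrix n r K} {W : Matrix m r K} (hV : Vᵀ * V = 1) (hW : Wᵀ * W = 1)
    {Q P : Matrix r r K} (hQ : IsUnit Q.det) (hP : IsUnit P.det) :
    (W * P) * ((W * P)ᵀ * (W * P))⁻¹ * ((V * Q)ᵀ * (V * Q))⁻¹ * (V * Q)ᵀ =
      W * (Q * Pᵀ)⁻¹ * Vᵀ := by
  have hQT : IsUnit Qᵀ.det := by rwa [det_transpose]
  rw [transpose_mul_self_mul_of_transpose_mul_self_eq_one hV,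
    transpose_mul_self_mul_of_transpose_mul_self_eq_one hW, mul_inv_rev, mul_inv_rev,
    transpose_mul, mul_inv_rev]
  simp only [Matrix.mul_assoc]
  rw [nonsing_inv_mul_cancel_left Qᵀ Vᵀ hQT, mul_nonsing_inv_cancel_left P _ hP]

theorem scaledGD_update_mul_transpose (μ : K) (G : Matrix n m K)
    (L : Matrix n r K) (R : Matrix m r K) :
    (L + μ • (G * R * (Rᵀ * R)⁻¹)) * (R + μ • (Gᵀ * L * (Lᵀ * L)⁻¹))ᵀ =
      L * Rᵀ + μ • (G * (R * (Rᵀ * R)⁻¹ * Rᵀ)) + μ • (L * (Lᵀ * L)⁻¹ * Lᵀ * G)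
        + μ ^ 2 • (G * (R * (Rᵀ * R)⁻¹ * (Lᵀ * L)⁻¹ * Lᵀ) * G) := by
  simp only [transpose_add, transpose_smul, transpose_mul, transpose_transpose,
    transpose_nonsing_inv, Matrix.add_mul, Matrix.mul_add, Matrix.smul_mul, Matrix.mul_smul,
    smul_add, smul_smul, ← pow_two, Matrix.mul_assoc]
  abel

end CommRing

end Matrix

theorem measOp_sub {n1 n2 m : ℕ} (A : Fin m → Matrix (Fin n1) (Fin n2) ℝ)
    (X Y : Matrix (Fin n1) (Fin n2) ℝ) : measOp A (X - Y) = measOp A X - measOp A Y := by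
  funext i
  simp only [measOp, frobInner, Matrix.mul_sub, Matrix.trace_sub, mul_sub, Pi.sub_apply]

theorem statement16_general {n1 n2 m r : ℕ}
    (A : Fin m → Matrix (Fin n1) (Fin n2) ℝ)
    (Xstar : Matrix (Fin n1) (Fin n2) ℝ)
    (L : Matrix (Fin n1) (Fin r) ℝ) (R : Matrix (Fin n2) (Fin r) ℝ)
    (hL : L.rank = r) (hR : R.rank = r)
    (Vt : Matrix (Fin n1) (Fin r) ℝ) (St : Matrix (Fin r) (Fin r) ℝ)
    (Wt : Matrix (Fin n2) (Fin r) ℝ)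
    (hsvd : IsCompactSVD (L * Rᵀ) Vt St Wt)
    (μ : ℝ)
    (M : Matrix (Fin n1) (Fin n2) ℝ)
    (hM : M = opAA A (Xstar - L * Rᵀ))
    (Lnext : Matrix (Fin n1) (Fin r) ℝ) (Rnext : Matrix (Fin n2) (Fin r) ℝ)
    (hstep : ScaledGDStep A (measOp A Xstar) μ L R Lnext Rnext) :
    L * (Lᵀ * L)⁻¹ * Lᵀ = Vt * Vtᵀ ∧
    R * (Rᵀ * R)⁻¹ * Rᵀ = Wt * Wtᵀ ∧
    R * (Rᵀ * R)⁻¹ * (Lᵀ * L)⁻¹ * Lᵀ = Wt * St⁻¹ * Vtᵀ ∧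
    Lnext * Rnextᵀ =
      L * Rᵀ + μ • (M * Wt * Wtᵀ) + μ • (Vt * Vtᵀ * M)
        + μ ^ 2 • (M * Wt * St⁻¹ * Vtᵀ * M) := by
  obtain ⟨hX, hV, hW, -, -⟩ := hsvd
  have hLL := isUnit_det_transpose_mul_self_of_rank_eq_card L (by rw [hL, Fintype.card_fin])
  have hRR := isUnit_det_transpose_mul_self_of_rank_eq_card R (by rw [hR, Fintype.card_fin])
  have hXT : R * Lᵀ = Wt * (Stᵀ * Vtᵀ) := by
    rw [← transpose_transpose R, ← transpose_mul, hX]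
    simp only [transpose_mul, transpose_transpose, Matrix.mul_assoc]
  have hLQ := mul_transpose_mul_eq_of_mul_transpose_eq hV (hX.trans (Matrix.mul_assoc _ _ _)) hRR
  have hRP := mul_transpose_mul_eq_of_mul_transpose_eq hW hXT hLL
  -- from here on `L = Vt * Q` and `R = Wt * P`
  generalize Vtᵀ * L = Q at hLQ
  generalize Wtᵀ * R = P at hRP
  subst hLQ hRP
  have hQ := isUnit_det_of_isUnit_det_transpose_mul_self <|
    (transpose_mul_self_mul_of_transpose_mul_self_eq_one hV Q) ▸ hLL
  have hP := isUnit_det_of_isUnit_det_transpose_mul_self <|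
    (transpose_mul_self_mul_of_transpose_mul_self_eq_one hW P) ▸ hRR
  have hS : St = Q * Pᵀ := by
    have sandwich (S : Matrix (Fin r) (Fin r) ℝ) : Vtᵀ * (Vt * S * Wtᵀ) * Wt = S := by
      simp only [Matrix.mul_assoc]
      rw [hW, Matrix.mul_one, ← Matrix.mul_assoc, hV, Matrix.one_mul]
    rw [← sandwich St, ← hX, ← sandwich (Q * Pᵀ)]
    simp only [transpose_mul, Matrix.mul_assoc]
  have projL := mul_inv_transpose_mul_self_mul_transpose hV hQ
  have projR := mul_inv_transpose_mul_self_mul_transpose hW hP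
  have cross := mul_inv_transpose_mul_self_mul_inv_transpose_mul_self_mul_transpose hV hW hQ hP
  rw [← hS] at cross
  refine ⟨projL, projR, cross, ?_⟩
  obtain ⟨rfl, rfl⟩ := hstep
  rw [← measOp_sub, ← opAA, ← hM, scaledGD_update_mul_transpose, projL, projR, cross]
  simp only [Matrix.mul_assoc]

/-- Algebraic identities for one ScaledGD update: the scaled Gram
projections equal `V_tV_tᵀ`, `W_tW_tᵀ`, `W_tΣ_t⁻¹V_tᵀ`, and the resulting product
formula for `L_{t+1}R_{t+1}ᵀ` with `M_t = (𝒜*𝒜)(X⋆ − X_t)`. -/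
theorem statement16 {n1 n2 m r : ℕ}
    (A : Fin m → Matrix (Fin n1) (Fin n2) ℝ)
    (Xstar : Matrix (Fin n1) (Fin n2) ℝ)
    (L : Matrix (Fin n1) (Fin r) ℝ) (R : Matrix (Fin n2) (Fin r) ℝ)
    (hL : L.rank = r) (hR : R.rank = r)
    (Vt : Matrix (Fin n1) (Fin r) ℝ) (St : Matrix (Fin r) (Fin r) ℝ)
    (Wt : Matrix (Fin n2) (Fin r) ℝ)
    (hsvd : IsCompactSVD (L * Rᵀ) Vt St Wt)
    (μ : ℝ) (hμ : 0 < μ)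
    (M : Matrix (Fin n1) (Fin n2) ℝ)
    (hM : M = opAA A (Xstar - L * Rᵀ))
    (Lnext : Matrix (Fin n1) (Fin r) ℝ) (Rnext : Matrix (Fin n2) (Fin r) ℝ)
    (hstep : ScaledGDStep A (measOp A Xstar) μ L R Lnext Rnext) :
    L * (Lᵀ * L)⁻¹ * Lᵀ = Vt * Vtᵀ ∧
    R * (Rᵀ * R)⁻¹ * Rᵀ = Wt * Wtᵀ ∧
    R * (Rᵀ * R)⁻¹ * (Lᵀ * L)⁻¹ * Lᵀ = Wt * St⁻¹ * Vtᵀ ∧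
    Lnext * Rnextᵀ =
      L * Rᵀ + μ • (M * Wt * Wtᵀ) + μ • (Vt * Vtᵀ * M)
        + μ ^ 2 • (M * Wt * St⁻¹ * Vtᵀ * M) :=
  statement16_general A Xstar L R hL hR Vt St Wt hsvd μ M hM Lnext Rnext hstep
end
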